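/- arXiv:2007.13244 — 3 statements merged into one kernel-verified Lean document; each statement's English description precedes it below -/
import Mathlib

section
/- Let G be a group and x, u, v ∈ G. Let a ∈ ℤ, and suppose xᵃ commutes with u, and xᵃ⁻¹ commutes with v. If x commutes with uv, then x commutes with v (and hence also with u). -/
/-!
From `x (u v) = (u v) x` one gets `u⁻¹ x u = v x v⁻¹ =: y`. The first description of `y`
and the hypothesis on `u` give `y ^ a = x ^ a`; the second and the hypothesis on `v` give
`y ^ (a - 1) = x ^ (a - 1)`. Dividing, `y = x`, i.e. `v` commutes with `x`.
-/

section

variable {G : Type*} [Group G]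

theorem eq_of_zpow_eq_of_zpow_sub_one_eq {x y : G} {a : ℤ} (ha : y ^ a = x ^ a)
    (ha' : y ^ (a - 1) = x ^ (a - 1)) : y = x := by
  rwa [zpow_sub_one, zpow_sub_one, ha, mul_right_inj, inv_inj] at ha'

theorem inv_mul_mul_eq_mul_mul_inv_of_commute_mul {x u v : G} (h : Commute x (u * v)) :
    u⁻¹ * x * u = v * x * v⁻¹ := by
  rw [eq_mul_inv_iff_mul_eq]
  simp only [mul_assoc]
  rw [h.eq, mul_assoc, inv_mul_cancel_left]

theorem conj_zpow_eq_zpow_of_commute {x u : G} {a : ℤ} (hu : Commute (x ^ a) u) :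
    (u * x * u⁻¹) ^ a = x ^ a := by
  rw [conj_zpow, ← hu.eq, mul_inv_cancel_right]

end

/-- If `xᵃ` commutes with `u`, `xᵃ⁻¹` commutes with `v`, and `x` commutes with `u*v`,
then `x` commutes with `v` and with `u`. -/
theorem commute_of_commute_mul {G : Type*} [Group G] (x u v : G) (a : ℤ)
    (hu : Commute (x ^ a) u) (hv : Commute (x ^ (a - 1)) v)
    (h : Commute x (u * v)) : Commute x v ∧ Commute x u := by
  have hconj := inv_mul_mul_eq_mul_mul_inv_of_commute_mul h
  have ha : (v * x * v⁻¹) ^ a = x ^ a := by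
    rw [← hconj, ← conj_zpow_eq_zpow_of_commute (u := u⁻¹) hu.inv_right, inv_inv]
  have hvx : v * x * v⁻¹ = x :=
    eq_of_zpow_eq_of_zpow_sub_one_eq ha (conj_zpow_eq_zpow_of_commute hv)
  have hxv : Commute x v := (mul_inv_eq_iff_eq_mul.mp hvx).symm
  exact ⟨hxv, by simpa only [mul_inv_cancel_right] using h.mul_right hxv.inv_right⟩
end

section
/- Let G be a group and x, w, u ∈ G, and set v = u·w. Let a ∈ ℤ. Suppose xᵃ commutes with w and xᵃ⁻¹ commutes with u. If x commutes with the conjugate x^v = v⁻¹xv, then x commutes with x^u = u⁻¹xu. -/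
/-! Both `xᵃ` and `xᵃ⁻¹` commute with `x^u`, hence so does `x = (xᵃ⁻¹)⁻¹ xᵃ`. For `xᵃ⁻¹` this is
because it commutes with `x` and `u`; for `xᵃ`, conjugating `[x, x^{uw}] = 1` by `w⁻¹`, which
commutes with `xᵃ`, gives `[xᵃ, x^u] = 1`. -/

namespace Commute

variable {G : Type*} [Group G]

theorem conj_right {a b u : G} (hb : Commute a b) (hu : Commute a u) :
    Commute a (u⁻¹ * b * u) :=
  (hu.inv_right.mul_right hb).mul_right hu

theorem of_zpow_of_zpow_sub_one {x c : G} {a : ℤ} (ha : Commute (x ^ a) c)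
    (ha' : Commute (x ^ (a - 1)) c) : Commute x c := by
  have hx : (x ^ (a - 1))⁻¹ * x ^ a = x := by rw [zpow_sub_one]; group
  exact hx ▸ ha'.inv_left.mul_left ha

end Commute

/-- If `v = u*w`, `xᵃ` commutes with `w`, `xᵃ⁻¹` commutes with `u`, and `x` commutes with
the conjugate `x^v = v⁻¹xv`, then `x` commutes with `x^u = u⁻¹xu`. -/
theorem commute_conj_of_commute_conj {G : Type*} [Group G] (x w u : G) (a : ℤ)
    (hw : Commute (x ^ a) w) (hu : Commute (x ^ (a - 1)) u)
    (h : Commute x ((u * w)⁻¹ * x * (u * w))) :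
    Commute x (u⁻¹ * x * u) := by
  have hv : (u * w)⁻¹ * x * (u * w) = w⁻¹ * (u⁻¹ * x * u) * w := by group
  have hxu : u⁻¹ * x * u = w⁻¹⁻¹ * (w⁻¹ * (u⁻¹ * x * u) * w) * w⁻¹ := by group
  have ha : Commute (x ^ a) (u⁻¹ * x * u) :=
    hxu ▸ ((hv ▸ h).zpow_left a).conj_right hw.inv_right
  have ha' : Commute (x ^ (a - 1)) (u⁻¹ * x * u) :=
    ((Commute.refl x).zpow_left (a - 1)).conj_right hu
  exact ha.of_zpow_of_zpow_sub_one ha'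
end

section
/- Let G be a group, x ∈ G, and w₁, …, wₙ ∈ [G,G] elements of the commutator subgroup. If the quotient of G by the normal closure of the set {[x, [x, wᵢ]] : 1 ≤ i ≤ n} is abelian, then the quotient of G by the normal closure of {[x, wᵢ] : 1 ≤ i ≤ n} is also abelian. -/
/-!
Each relator `[x, [x, wᵢ]]` lies in the normal closure of `[x, wᵢ]`, being a conjugate of
`[x, wᵢ]⁻¹` times `[x, wᵢ]`. So the second quotient is a quotient of the first, and a
quotient of an abelian group is abelian.
-/

theorem Subgroup.Normal.inv_mul_inv_mul_mul_mem {G : Type*} [Group G] {N : Subgroup G}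
    (hN : N.Normal) (x : G) {c : G} (hc : c ∈ N) : x⁻¹ * c⁻¹ * x * c ∈ N := by
  simpa only [inv_inv] using mul_mem (hN.conj_mem c⁻¹ (inv_mem hc) x⁻¹) hc

theorem QuotientGroup.mul_comm_of_le {G : Type*} [Group G] {M N : Subgroup G} [M.Normal]
    [N.Normal] (hMN : M ≤ N) (hM : ∀ a b : G ⧸ M, a * b = b * a) (a b : G ⧸ N) :
    a * b = b * a := by
  obtain ⟨a, rfl⟩ := QuotientGroup.mk_surjective a
  obtain ⟨b, rfl⟩ := QuotientGroup.mk_surjective b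
  have hab : (a * b)⁻¹ * (b * a) ∈ M := by
    simpa only [← QuotientGroup.mk_mul, QuotientGroup.eq] using hM a b
  simpa only [← QuotientGroup.mk_mul, QuotientGroup.eq] using hMN hab

theorem stabilization_of_finger_relations_general {G : Type*} [Group G] (x : G)
    (n : ℕ) (w : Fin n → G)
    (hab : ∀ a b : G ⧸ Subgroup.normalClosure
        (Set.range fun i =>
          x⁻¹ * (x⁻¹ * (w i)⁻¹ * x * (w i))⁻¹ * x * (x⁻¹ * (w i)⁻¹ * x * (w i))),
      a * b = b * a) :
    ∀ a b : G ⧸ Subgroup.normalClosure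
        (Set.range fun i => x⁻¹ * (w i)⁻¹ * x * (w i)),
      a * b = b * a := by
  refine QuotientGroup.mul_comm_of_le (Subgroup.normalClosure_le_normal ?_) hab
  rintro _ ⟨i, rfl⟩
  exact Subgroup.normalClosure_normal.inv_mul_inv_mul_mul_mem x
    (Subgroup.subset_normalClosure ⟨i, rfl⟩)

/-- If the quotient by the normal closure of the relators `[x,[x,wᵢ]]` (with each
`wᵢ ∈ [G,G]`) is abelian, then so is the quotient by the normal closure of the `[x,wᵢ]`,
where `[a,b] = a⁻¹b⁻¹ab`. -/
theorem stabilization_of_finger_relations {G : Type*} [Group G] (x : G)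
    (n : ℕ) (w : Fin n → G) (hw : ∀ i, w i ∈ commutator G)
    (hab : ∀ a b : G ⧸ Subgroup.normalClosure
        (Set.range fun i =>
          x⁻¹ * (x⁻¹ * (w i)⁻¹ * x * (w i))⁻¹ * x * (x⁻¹ * (w i)⁻¹ * x * (w i))),
      a * b = b * a) :
    ∀ a b : G ⧸ Subgroup.normalClosure
        (Set.range fun i => x⁻¹ * (w i)⁻¹ * x * (w i)),
      a * b = b * a :=
  stabilization_of_finger_relations_general x n w hab
end
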